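/- Let A be supersolvable with M-chain ∅ = A_{X_0} ⊆ A_{X_1} ⊆ ⋯ ⊆ A_{X_r} = A, where r = rk(A). Then Σ_{i=1}^r |A_{X_i} ∖ A_{X_{i-1}}| = |A|, and the characteristic polynomial satisfies χ(A, t) = t^{ℓ−r} Π_{i=1}^r (t − e_i) with e_i = |A_{X_i} ∖ A_{X_{i-1}}|. -/
import Mathlib

open scoped Classical

variable {K : Type*} [Field K] {n : ℕ}

/-- A subspace is a (linear) hyperplane if it is the kernel of a nonzero linear form. -/
def IsHyperplane (H : Submodule K (Fin n → K)) : Prop :=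
  ∃ α : (Fin n → K) →ₗ[K] K, α ≠ 0 ∧ LinearMap.ker α = H

/-- A central arrangement: a finite set of linear hyperplanes. -/
def IsCentralArr (A : Finset (Submodule K (Fin n → K))) : Prop :=
  ∀ H ∈ A, IsHyperplane H

/-- `X` is a flat of `A` (a member of the intersection lattice `L(A)`). -/
def IsFlat (A : Finset (Submodule K (Fin n → K))) (X : Submodule K (Fin n → K)) : Prop :=
  ∃ B ⊆ A, X = B.inf id

/-- The characteristic polynomial of a central arrangement, via Whitney's theorem. -/
noncomputable def chiW (A : Finset (Submodule K (Fin n → K))) : Polynomial ℤ :=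
  ∑ B ∈ A.powerset,
    (-1 : Polynomial ℤ) ^ B.card * Polynomial.X ^ (Module.finrank K ↥(B.inf id))

/-- The localization `A_X = {H ∈ A : X ⊆ H}`. -/
noncomputable def loc (A : Finset (Submodule K (Fin n → K)))
    (X : Submodule K (Fin n → K)) : Finset (Submodule K (Fin n → K)) :=
  A.filter (fun H => X ≤ H)

/- ------------------ auxiliary lemmas ------------------- -/

lemma hyp_coatom {H : Submodule K (Fin n → K)} (h : IsHyperplane H) : IsCoatom H := by
  obtain ⟨α, hα, rfl⟩ := h
  have : IsSimpleModule K K := isSimpleModule_iff_finrank_eq_one.mpr (Module.finrank_self K)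
  exact LinearMap.isCoatom_ker_of_surjective (LinearMap.surjective_of_ne_zero hα)

lemma hyp_finrank {H : Submodule K (Fin n → K)} (h : IsHyperplane H) :
    Module.finrank K H + 1 = n := by
  obtain ⟨α, hα, rfl⟩ := h
  have : IsSimpleModule K K := isSimpleModule_iff_finrank_eq_one.mpr (Module.finrank_self K)
  have h1 := LinearMap.finrank_range_add_finrank_ker α
  rw [LinearMap.range_eq_top.mpr (LinearMap.surjective_of_ne_zero hα), finrank_top,
    Module.finrank_self, Module.finrank_fin_fun] at h1
  omega

lemma hyp_cut {H W : Submodule K (Fin n → K)} (h : IsHyperplane H) (hW : ¬ W ≤ H) :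
    Module.finrank K ↥(W ⊓ H) + 1 = Module.finrank K W := by
  have hco := hyp_coatom h
  have hsup : W ⊔ H = ⊤ := by
    refine hco.2 _ ?_
    rcases lt_or_eq_of_le (le_sup_right : H ≤ W ⊔ H) with h' | h'
    · exact h'
    · exact absurd (h' ▸ le_sup_left : W ≤ H) hW
  have h2 := Submodule.finrank_sup_add_finrank_inf_eq W H
  rw [hsup, finrank_top, Module.finrank_fin_fun] at h2
  have h3 := hyp_finrank h
  have h4 : Module.finrank K W ≤ Module.finrank K (Fin n → K) := W.finrank_le
  rw [Module.finrank_fin_fun] at h4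
  omega

lemma sum_powerset_union' {α M : Type*} [DecidableEq α] [AddCommMonoid M]
    {s t : Finset α} (h : Disjoint s t) (f : Finset α → M) :
    ∑ u ∈ (s ∪ t).powerset, f u = ∑ a ∈ s.powerset, ∑ b ∈ t.powerset, f (a ∪ b) := by
  induction s using Finset.induction_on generalizing f with
  | empty => simp
  | @insert x s hx ih =>
    have hds : Disjoint s t := h.mono_left (Finset.subset_insert x s)
    have hxt : x ∉ t := Finset.disjoint_left.mp h (Finset.mem_insert_self x s)
    have hxu : x ∉ s ∪ t := by simp [hx, hxt]
    rw [Finset.insert_union, Finset.sum_powerset_insert hxu, ih hds f,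
      Finset.sum_powerset_insert hx, ih hds (fun u => f (insert x u))]
    congr 1
    refine Finset.sum_congr rfl fun a _ => Finset.sum_congr rfl fun b _ => ?_
    rw [Finset.insert_union]

lemma sum_powerset_split {α M : Type*} [DecidableEq α] [AddCommMonoid M]
    (D : Finset α) (G : Finset α → M) :
    ∑ b ∈ D.powerset, G b
      = G ∅ + (∑ x ∈ D, G {x})
        + ∑ b ∈ D.powerset.filter (fun b => 2 ≤ b.card), G b := by
  rw [← Finset.sum_filter_add_sum_filter_not D.powerset (fun b => b.card ≤ 1)]
  congr 1
  · have h1 : D.powerset.filter (fun b => b.card ≤ 1)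
        = insert ∅ (D.image ({·})) := by
      ext b
      simp only [Finset.mem_filter, Finset.mem_powerset, Finset.mem_insert, Finset.mem_image]
      constructor
      · rintro ⟨hsub, hc⟩
        have hc01 : b.card = 0 ∨ b.card = 1 := by omega
        rcases hc01 with h | h
        · exact Or.inl (Finset.card_eq_zero.mp h)
        · obtain ⟨x, rfl⟩ := Finset.card_eq_one.mp h
          exact Or.inr ⟨x, hsub (Finset.mem_singleton_self x), rfl⟩
      · rintro (rfl | ⟨x, hx, rfl⟩)
        · simp
        · simp [Finset.singleton_subset_iff, hx]
    have hne : (∅ : Finset α) ∉ D.image ({·}) := by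
      intro hmem
      obtain ⟨x, -, h⟩ := Finset.mem_image.mp hmem
      exact (Finset.singleton_ne_empty x) h
    have hinj : ∀ x ∈ D, ∀ y ∈ D, ({x} : Finset α) = {y} → x = y := by
      intro x _ y _ h; simpa using h
    rw [h1, Finset.sum_insert hne, Finset.sum_image hinj]
  · apply Finset.sum_congr _ (fun _ _ => rfl)
    apply Finset.filter_congr
    intro b _
    simp only [not_le]
    omega

lemma flat_inf_le {B : Finset (Submodule K (Fin n → K))} {X : Submodule K (Fin n → K)}
    (h : IsFlat B X) : B.inf id ≤ X := by
  obtain ⟨T, hT, rfl⟩ := h; exact Finset.inf_mono hT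

lemma flat_closure {B : Finset (Submodule K (Fin n → K))} {X : Submodule K (Fin n → K)}
    (h : IsFlat B X) : X = (loc B X).inf id := by
  obtain ⟨T, hT, rfl⟩ := h
  apply le_antisymm
  · exact Finset.le_inf fun H hH => (Finset.mem_filter.mp hH).2
  · refine Finset.inf_mono fun H hH => ?_
    exact Finset.mem_filter.mpr ⟨hT hH, Finset.inf_le hH⟩


/-- The key modular-coatom factorization step. -/
lemma key_step {B : Finset (Submodule K (Fin n → K))} (hB : IsCentralArr B)
    {X : Submodule K (Fin n → K)} (hXf : IsFlat B X)
    (hmod : ∀ Y, IsFlat B Y → IsFlat B (X ⊔ Y))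
    (hdim : Module.finrank K X = Module.finrank K ↥(B.inf id) + 1) :
    Polynomial.X * chiW B
      = (Polynomial.X - Polynomial.C (((B \ loc B X).card : ℤ))) * chiW (loc B X) := by
  classical
  set B' := loc B X with hB'def
  set D := B \ B' with hDdef
  have hB'sub : B' ⊆ B := Finset.filter_subset _ _
  have hDsub : D ⊆ B := Finset.sdiff_subset
  have hunion : B' ∪ D = B := Finset.union_sdiff_of_subset hB'sub
  have hdisj : Disjoint B' D := Finset.disjoint_sdiff
  have hXleB' : ∀ a : Finset (Submodule K (Fin n → K)), a ⊆ B' → X ≤ a.inf id :=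
    fun a ha => Finset.le_inf fun H hH => (Finset.mem_filter.mp (ha hH)).2
  have hDnotle : ∀ H ∈ D, ¬ X ≤ H := by
    intro H hH
    rw [hDdef, Finset.mem_sdiff, hB'def, loc, Finset.mem_filter] at hH
    exact fun hx => hH.2 ⟨hH.1, hx⟩
  -- Claim C : redundancy for |b| ≥ 2
  have claimC : ∀ b : Finset (Submodule K (Fin n → K)), b ⊆ D → 2 ≤ b.card →
      ∃ H'' ∈ B', b.inf id ≤ H'' := by
    intro b hbD hb2
    obtain ⟨H, hH, H', hH', hne⟩ := Finset.one_lt_card.mp hb2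
    set Y := b.inf id with hYdef
    have hbB : b ⊆ B := hbD.trans hDsub
    have hYflat : IsFlat B Y := ⟨b, hbB, rfl⟩
    obtain ⟨T, hTB, hZ⟩ := hmod Y hYflat
    have hHhyp : IsHyperplane H := hB H (hbB hH)
    have hH'hyp : IsHyperplane H' := hB H' (hbB hH')
    have hHH' : ¬ H ≤ H' := by
      intro hle
      rcases eq_or_lt_of_le hle with h' | h'
      · exact hne h'
      · exact (hyp_coatom hH'hyp).1 ((hyp_coatom hHhyp).2 _ h')
    have hcut := hyp_cut hH'hyp hHH'
    have hHn := hyp_finrank hHhyp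
    have hYH : Y ≤ H ⊓ H' := le_inf (Finset.inf_le hH) (Finset.inf_le hH')
    have hYle : Module.finrank K Y ≤ Module.finrank K ↥(H ⊓ H') := Submodule.finrank_mono hYH
    have hXY : B.inf id ≤ X ⊓ Y := le_inf (flat_inf_le hXf) (Finset.inf_mono hbB)
    have hXYle : Module.finrank K ↥(B.inf id) ≤ Module.finrank K ↥(X ⊓ Y) :=
      Submodule.finrank_mono hXY
    have hsupinf := Submodule.finrank_sup_add_finrank_inf_eq X Y
    have hZtop : X ⊔ Y ≠ ⊤ := by
      intro htop
      rw [htop, finrank_top, Module.finrank_fin_fun] at hsupinf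
      omega
    have hTne : T.Nonempty := by
      rcases Finset.eq_empty_or_nonempty T with rfl | h
      · rw [Finset.inf_empty] at hZ; exact absurd hZ hZtop
      · exact h
    obtain ⟨H'', hH''T⟩ := hTne
    have hZle : X ⊔ Y ≤ H'' := hZ ▸ Finset.inf_le hH''T
    refine ⟨H'', ?_, le_trans le_sup_right hZle⟩
    exact Finset.mem_filter.mpr ⟨hTB hH''T, le_trans le_sup_left hZle⟩
  have lhs_eq : Polynomial.X * chiW B
      = ∑ b ∈ D.powerset, ∑ a ∈ B'.powerset,
          (-1 : Polynomial ℤ) ^ (a.card + b.card)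
            * Polynomial.X ^ (Module.finrank K ↥(a.inf id ⊓ b.inf id) + 1) := by
    rw [chiW, Finset.mul_sum, ← hunion,
      sum_powerset_union' hdisj
        (fun S => Polynomial.X *
          ((-1 : Polynomial ℤ) ^ S.card
            * Polynomial.X ^ (Module.finrank K ↥(S.inf id)))),
      Finset.sum_comm]
    refine Finset.sum_congr rfl fun b hb => Finset.sum_congr rfl fun a ha => ?_
    rw [Finset.mem_powerset] at ha hb
    have hab : Disjoint a b := hdisj.mono ha hb
    rw [Finset.card_union_of_disjoint hab,
      show (a ∪ b).inf id = a.inf id ⊓ b.inf id from Finset.inf_union]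
    ring
  -- empty part
  have hempty : (∑ a ∈ B'.powerset,
      (-1 : Polynomial ℤ) ^ (a.card + (∅ : Finset (Submodule K (Fin n → K))).card)
        * Polynomial.X ^ (Module.finrank K
            ↥(a.inf id ⊓ (∅ : Finset (Submodule K (Fin n → K))).inf id) + 1))
      = Polynomial.X * chiW B' := by
    rw [chiW, Finset.mul_sum]
    refine Finset.sum_congr rfl fun a _ => ?_
    rw [Finset.card_empty,
      show a.inf id ⊓ (∅ : Finset (Submodule K (Fin n → K))).inf id = a.inf id from by
        rw [Finset.inf_empty, inf_top_eq]]
    ring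
  -- singleton part
  have hsingle : ∀ H ∈ D, (∑ a ∈ B'.powerset,
      (-1 : Polynomial ℤ) ^ (a.card + ({H} : Finset (Submodule K (Fin n → K))).card)
        * Polynomial.X ^ (Module.finrank K
            ↥(a.inf id ⊓ ({H} : Finset (Submodule K (Fin n → K))).inf id) + 1))
      = - chiW B' := by
    intro H hH
    rw [chiW, ← Finset.sum_neg_distrib]
    refine Finset.sum_congr rfl fun a ha => ?_
    rw [Finset.mem_powerset] at ha
    have hcut : Module.finrank K ↥(a.inf id ⊓ H) + 1 = Module.finrank K ↥(a.inf id) :=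
      hyp_cut (hB H (hDsub hH)) fun hle => hDnotle H hH (le_trans (hXleB' a ha) hle)
    rw [Finset.card_singleton,
      show a.inf id ⊓ ({H} : Finset (Submodule K (Fin n → K))).inf id = a.inf id ⊓ H from by
        rw [Finset.inf_singleton]; rfl,
      hcut]
    ring
  -- sets of size ≥ 2 contribute zero
  have hbig : ∀ b ∈ D.powerset.filter (fun b => 2 ≤ b.card),
      (∑ a ∈ B'.powerset,
        (-1 : Polynomial ℤ) ^ (a.card + b.card)
          * Polynomial.X ^ (Module.finrank K ↥(a.inf id ⊓ b.inf id) + 1)) = 0 := by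
    intro b hb
    rw [Finset.mem_filter, Finset.mem_powerset] at hb
    obtain ⟨H'', hH''B', hle⟩ := claimC b hb.1 hb.2
    rw [← Finset.insert_erase hH''B',
      Finset.sum_powerset_insert (Finset.notMem_erase _ _)]
    have hcanc : ∀ a ∈ (B'.erase H'').powerset,
        (-1 : Polynomial ℤ) ^ ((insert H'' a).card + b.card)
          * Polynomial.X ^ (Module.finrank K ↥((insert H'' a).inf id ⊓ b.inf id) + 1)
        = - ((-1 : Polynomial ℤ) ^ (a.card + b.card)
          * Polynomial.X ^ (Module.finrank K ↥(a.inf id ⊓ b.inf id) + 1)) := by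
      intro a ha
      rw [Finset.mem_powerset] at ha
      have hH''a : H'' ∉ a := fun h => Finset.notMem_erase H'' B' (ha h)
      have hinf : (insert H'' a).inf id ⊓ b.inf id = a.inf id ⊓ b.inf id := by
        rw [Finset.inf_insert]
        show (H'' ⊓ a.inf id) ⊓ b.inf id = a.inf id ⊓ b.inf id
        rw [inf_assoc, inf_comm (a.inf id), ← inf_assoc, inf_eq_right.mpr hle, inf_comm]
      rw [Finset.card_insert_of_notMem hH''a, hinf,
        show a.card + 1 + b.card = (a.card + b.card) + 1 from by omega, pow_succ]
      ring
    rw [Finset.sum_congr rfl hcanc, Finset.sum_neg_distrib, add_neg_cancel]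
  rw [lhs_eq,
    sum_powerset_split D
      (fun b => ∑ a ∈ B'.powerset,
        (-1 : Polynomial ℤ) ^ (a.card + b.card)
          * Polynomial.X ^ (Module.finrank K ↥(a.inf id ⊓ b.inf id) + 1)),
    hempty, Finset.sum_congr rfl hsingle, Finset.sum_congr rfl hbig,
    Finset.sum_const, Finset.sum_const_zero, add_zero]
  have hC : Polynomial.C ((D.card : ℤ)) = ((D.card : ℕ) : Polynomial ℤ) :=
    map_natCast Polynomial.C D.card
  rw [sub_mul, hC, nsmul_eq_mul]
  ring

/-- Let `A` be a supersolvable central `n`-arrangement of rank `r` with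
M-chain `∅ = A_{X_0} ⊆ A_{X_1} ⊆ ⋯ ⊆ A_{X_r} = A` (each `A_{X_i}` a modular coatom of
`A_{X_{i+1}}`, i.e. `X_i` is a flat of `A_{X_{i+1}}` of corank 1 there, modular in its
intersection lattice).  Then `Σ_{i=1}^r |A_{X_i} ∖ A_{X_{i-1}}| = |A|` and
`χ(A, t) = t^{n−r} Π_{i=1}^r (t − e_i)` with `e_i = |A_{X_i} ∖ A_{X_{i-1}}|`. -/
theorem stmt_15 (A : Finset (Submodule K (Fin n → K))) (hA : IsCentralArr A)
    (r : ℕ) (hr : Module.finrank K ↥(A.inf id) + r = n)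
    (Xs : Fin (r + 1) → Submodule K (Fin n → K))
    (hXflat : ∀ i, IsFlat A (Xs i))
    (h0 : loc A (Xs 0) = ∅)
    (hlast : loc A (Xs (Fin.last r)) = A)
    (hchain : ∀ i : Fin r, loc A (Xs i.castSucc) ⊆ loc A (Xs i.succ))
    (hmc : ∀ i : Fin r,
      IsFlat (loc A (Xs i.succ)) (Xs i.castSucc) ∧
      (∀ Y, IsFlat (loc A (Xs i.succ)) Y →
        IsFlat (loc A (Xs i.succ)) (Xs i.castSucc ⊔ Y)) ∧
      Module.finrank K ↥(Xs i.castSucc) =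
        Module.finrank K ↥((loc A (Xs i.succ)).inf id) + 1) :
    (∑ i : Fin r, ((loc A (Xs i.succ)) \ (loc A (Xs i.castSucc))).card = A.card) ∧
      chiW A = Polynomial.X ^ (n - r) *
        ∏ i : Fin r, (Polynomial.X -
          Polynomial.C ((((loc A (Xs i.succ)) \ (loc A (Xs i.castSucc))).card : ℤ))) := by
  classical
  have hrn : r ≤ n := by omega
  have hloc : ∀ i : Fin r,
      loc (loc A (Xs i.succ)) (Xs i.castSucc) = loc A (Xs i.castSucc) := by
    intro i
    ext H
    constructor
    · intro h
      have h1 := Finset.mem_filter.mp h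
      have h2 := Finset.mem_filter.mp h1.1
      exact Finset.mem_filter.mpr ⟨h2.1, h1.2⟩
    · intro h
      have h1 := Finset.mem_filter.mp h
      have h2 : H ∈ loc A (Xs i.succ) := hchain i h
      exact Finset.mem_filter.mpr ⟨h2, h1.2⟩
  have hstep : ∀ i : Fin r,
      Polynomial.X * chiW (loc A (Xs i.succ))
        = (Polynomial.X -
            Polynomial.C ((((loc A (Xs i.succ)) \ (loc A (Xs i.castSucc))).card : ℤ)))
            * chiW (loc A (Xs i.castSucc)) := by
    intro i
    have hBA : IsCentralArr (loc A (Xs i.succ)) :=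
      fun H hH => hA H (Finset.filter_subset _ _ hH)
    have h := key_step hBA (hmc i).1 (hmc i).2.1 (hmc i).2.2
    rwa [hloc i] at h
  -- cardinality function
  let c : ℕ → ℕ := fun j =>
    if h : j < r then
      (((loc A (Xs (⟨j, h⟩ : Fin r).succ)) \ (loc A (Xs (⟨j, h⟩ : Fin r).castSucc))).card)
    else 0
  have hcv : ∀ i : Fin r,
      c i.val = ((loc A (Xs i.succ)) \ (loc A (Xs i.castSucc))).card :=
    fun i => dif_pos i.isLt
  have hX0 : (⟨0, Nat.lt_succ_of_le (Nat.zero_le r)⟩ : Fin (r + 1)) = 0 := by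
    apply Fin.ext; simp
  -- part 1
  have hsum : ∀ m (hm : m ≤ r),
      ∑ j ∈ Finset.range m, c j
        = (loc A (Xs ⟨m, Nat.lt_succ_of_le hm⟩)).card := by
    intro m
    induction m with
    | zero =>
      intro hm
      rw [Finset.sum_range_zero, hX0, h0, Finset.card_empty]
    | succ m ih =>
      intro hm
      have hm' : m < r := hm
      set i : Fin r := ⟨m, hm'⟩ with hidef
      have hcm : c m = ((loc A (Xs i.succ)) \ (loc A (Xs i.castSucc))).card := dif_pos hm'
      have hcard := Finset.card_sdiff_add_card_eq_card (hchain i)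
      have hih : ∑ j ∈ Finset.range m, c j = (loc A (Xs i.castSucc)).card :=
        ih (le_of_lt hm')
      have hgoal : (⟨m + 1, Nat.lt_succ_of_le hm⟩ : Fin (r + 1)) = i.succ := rfl
      rw [Finset.sum_range_succ, hih, hcm, hgoal]
      omega
  -- part 2 : the characteristic polynomial
  let E : ℕ → Polynomial ℤ := fun j =>
    if h : j < r then
      Polynomial.C ((((loc A (Xs (⟨j, h⟩ : Fin r).succ))
        \ (loc A (Xs (⟨j, h⟩ : Fin r).castSucc))).card : ℤ))
    else 0
  have hEv : ∀ i : Fin r,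
      E i.val = Polynomial.C ((((loc A (Xs i.succ)) \ (loc A (Xs i.castSucc))).card : ℤ)) :=
    fun i => dif_pos i.isLt
  have hchi : ∀ m (hm : m ≤ r),
      chiW (loc A (Xs ⟨m, Nat.lt_succ_of_le hm⟩))
        = Polynomial.X ^ (n - m) * ∏ j ∈ Finset.range m, (Polynomial.X - E j) := by
    intro m
    induction m with
    | zero =>
      intro hm
      rw [hX0, h0, Finset.prod_range_zero, mul_one, Nat.sub_zero, chiW,
        Finset.powerset_empty, Finset.sum_singleton, Finset.card_empty,
        show ((∅ : Finset (Submodule K (Fin n → K))).inf id) = ⊤ from Finset.inf_empty,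
        finrank_top, Module.finrank_fin_fun]
      ring
    | succ m ih =>
      intro hm
      have hm' : m < r := hm
      set i : Fin r := ⟨m, hm'⟩ with hidef
      have hih : chiW (loc A (Xs i.castSucc))
          = Polynomial.X ^ (n - m) * ∏ j ∈ Finset.range m, (Polynomial.X - E j) :=
        ih (le_of_lt hm')
      have hEm : E m = Polynomial.C
          ((((loc A (Xs i.succ)) \ (loc A (Xs i.castSucc))).card : ℤ)) := dif_pos hm'
      apply mul_left_cancel₀ (Polynomial.X_ne_zero (R := ℤ))
      show Polynomial.X * chiW (loc A (Xs i.succ)) = _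
      rw [hstep i, hih, Finset.prod_range_succ, ← hEm,
        show n - m = (n - (m + 1)) + 1 from by omega, pow_succ]
      ring
  constructor
  · have h1 : ∑ i : Fin r, ((loc A (Xs i.succ)) \ (loc A (Xs i.castSucc))).card
        = ∑ j ∈ Finset.range r, c j := by
      rw [← Fin.sum_univ_eq_sum_range c r]
      exact Finset.sum_congr rfl fun i _ => (hcv i).symm
    rw [h1, hsum r le_rfl,
      show (⟨r, Nat.lt_succ_of_le le_rfl⟩ : Fin (r + 1)) = Fin.last r from rfl, hlast]
  · have h2 := hchi r le_rfl
    rw [show (⟨r, Nat.lt_succ_of_le le_rfl⟩ : Fin (r + 1)) = Fin.last r from rfl,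
      hlast] at h2
    rw [h2]
    congr 1
    rw [← Fin.prod_univ_eq_prod_range (fun j => Polynomial.X - E j) r]
    exact Finset.prod_congr rfl fun i _ => by rw [hEv i]
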